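/- arXiv:2501.16261 — 2 statements merged into one kernel-verified Lean document; each statement's English description precedes it below -/
import Mathlib

section
/- Let Ψ: ℝⁿ → ℂ be continuous with Re Ψ ≥ 0, and suppose there exist M > 0 and β ∈ (0,2] such that Re Ψ(ξ) ≥ ‖ξ‖^β whenever ‖ξ‖ > M. Fix θ ∈ (0,1] and T > 0, and let p_t(x) := (2π)^{−n} ∫_{ℝⁿ} e^{−tΨ(ξ)} e^{−i⟨x,ξ⟩} dξ. Then there is a constant C > 0 such that |p_t(x+h) − p_t(x)| ≤ C ‖h‖^θ t^{−(θ+n)/β} for all t ∈ (0,T] and all x, h ∈ ℝⁿ. -/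
/-!
Write `p_t(x + h) - p_t(x) = (2π)^{-n} ∫ e^{-tΨ(ξ)} e^{-i⟨x,ξ⟩} (e^{-i⟨h,ξ⟩} - 1) dξ`. The last
factor is bounded by `min 2 (‖h‖ ‖ξ‖) ≤ 2^{1-θ} ‖h‖^θ ‖ξ‖^θ`, and the growth condition together
with `Re Ψ ≥ 0` gives `|e^{-tΨ(ξ)}| ≤ e^{t M^β} e^{-t‖ξ‖^β}`. The substitution `ξ ↦ t^{1/β} ξ` turns
`∫ ‖ξ‖^θ e^{-t‖ξ‖^β} dξ` into `t^{-(θ+n)/β}` times its value at `t = 1`, and `e^{t M^β} ≤ e^{T M^β}`.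
-/

open MeasureTheory Complex Set

noncomputable section

/-- The transition density `p_t(x) = (2π)^{-n} ∫ e^{-tΨ(ξ)} e^{-i⟨x,ξ⟩} dξ`. -/
def transDensity (n : ℕ) (Ψ : EuclideanSpace ℝ (Fin n) → ℂ) (t : ℝ)
    (x : EuclideanSpace ℝ (Fin n)) : ℂ :=
  (((2 * Real.pi) ^ n)⁻¹ : ℝ) *
    ∫ ξ : EuclideanSpace ℝ (Fin n),
      Complex.exp (-(t : ℂ) * Ψ ξ) * Complex.exp (-(Complex.I * ((inner ℝ x ξ : ℝ) : ℂ)))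

section HaarScaling

variable {E : Type*} [NormedAddCommGroup E] [NormedSpace ℝ E] [FiniteDimensional ℝ E]
  [MeasurableSpace E] [BorelSpace E] (μ : Measure E) [μ.IsAddHaarMeasure]

lemma integrable_norm_rpow_mul_exp_neg_mul_rpow {s β t : ℝ} (hs : 0 ≤ s) (hβ : 0 < β)
    (ht : 0 < t) : Integrable (fun x : E => ‖x‖ ^ s * Real.exp (-t * ‖x‖ ^ β)) μ := by
  obtain hE | hE := subsingleton_or_nontrivial E
  · exact (by fun_prop : Continuous fun x : E => ‖x‖ ^ s * Real.exp (-t * ‖x‖ ^ β))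
      |>.integrable_of_hasCompactSupport (.of_compactSpace _)
  · set k := Module.finrank ℝ E - 1
    rw [integrable_fun_norm_addHaar μ (f := fun r => r ^ s * Real.exp (-t * r ^ β))]
    refine (integrableOn_rpow_mul_exp_neg_mul_rpow (s := s + k)
      (by linarith [k.cast_nonneg (α := ℝ)]) hβ ht).congr_fun
      (fun r (hr : 0 < r) => ?_) measurableSet_Ioi
    dsimp only
    rw [smul_eq_mul, Real.rpow_add hr, Real.rpow_natCast]
    ring

lemma integral_norm_rpow_mul_exp_neg_mul_rpow {s β t : ℝ} (hβ : 0 < β) (ht : 0 < t) :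
    ∫ x, ‖x‖ ^ s * Real.exp (-t * ‖x‖ ^ β) ∂μ =
      t ^ (-((s + Module.finrank ℝ E) / β)) * ∫ x, ‖x‖ ^ s * Real.exp (-‖x‖ ^ β) ∂μ := by
  set R := t ^ β⁻¹
  have hR : 0 < R := by positivity
  have hRβ : R ^ β = t := by rw [← Real.rpow_mul ht.le, inv_mul_cancel₀ hβ.ne', Real.rpow_one]
  have hscale : ∀ x : E, ‖R • x‖ ^ s * Real.exp (-‖R • x‖ ^ β) =
      R ^ s * (‖x‖ ^ s * Real.exp (-t * ‖x‖ ^ β)) := fun x => by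
    rw [norm_smul, Real.norm_of_nonneg hR.le, Real.mul_rpow hR.le (norm_nonneg x),
      Real.mul_rpow hR.le (norm_nonneg x), hRβ, neg_mul]
    ring
  have h := μ.integral_comp_smul_of_nonneg (fun x => ‖x‖ ^ s * Real.exp (-‖x‖ ^ β)) R
    (hR := hR.le)
  simp only [hscale, integral_const_mul, smul_eq_mul] at h
  rw [← Real.rpow_natCast, ← Real.rpow_neg hR.le] at h
  calc _ = R ^ (-s) * (R ^ s * ∫ x, ‖x‖ ^ s * Real.exp (-t * ‖x‖ ^ β) ∂μ) := by
        rw [← mul_assoc, ← Real.rpow_add hR, neg_add_cancel, Real.rpow_zero, one_mul]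
    _ = _ := by
        rw [h, ← mul_assoc, ← Real.rpow_add hR, ← Real.rpow_mul ht.le]
        ring_nf

end HaarScaling

lemma min_le_rpow_mul_rpow {a b θ : ℝ} (ha : 0 ≤ a) (hb : 0 ≤ b) (hθ0 : 0 ≤ θ) (hθ1 : θ ≤ 1) :
    min a b ≤ a ^ (1 - θ) * b ^ θ := by
  have hm : 0 ≤ min a b := le_min ha hb
  calc min a b = min a b ^ (1 - θ) * min a b ^ θ := by
        rw [← Real.rpow_add' hm (by norm_num), sub_add_cancel, Real.rpow_one]
    _ ≤ a ^ (1 - θ) * b ^ θ := by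
        gcongr
        exacts [min_le_left _ _, min_le_right _ _]

lemma norm_cexp_neg_I_mul_sub_one_le (b : ℝ) {θ : ℝ} (hθ0 : 0 ≤ θ) (hθ1 : θ ≤ 1) :
    ‖cexp (-(I * b)) - 1‖ ≤ 2 ^ (1 - θ) * |b| ^ θ := by
  have hrot : -(I * b) = I * ((-b : ℝ) : ℂ) := by push_cast; ring
  have h2 : ‖cexp (-(I * b)) - 1‖ ≤ 2 := by
    refine (norm_sub_le _ _).trans ?_
    rw [hrot, mul_comm, norm_exp_ofReal_mul_I, norm_one]
    norm_num
  have hb : ‖cexp (-(I * b)) - 1‖ ≤ |b| := by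
    have := Real.norm_exp_I_mul_ofReal_sub_one_le (x := -b)
    rwa [← hrot, Real.norm_eq_abs, abs_neg] at this
  exact (le_min h2 hb).trans (min_le_rpow_mul_rpow zero_le_two (abs_nonneg b) hθ0 hθ1)

section Symbol

variable {E : Type*} [SeminormedAddCommGroup E] {Ψ : E → ℂ} {M β : ℝ}

lemma norm_rpow_le_re_add_rpow (hΨre : ∀ ξ, 0 ≤ (Ψ ξ).re) (hM : 0 ≤ M) (hβ : 0 ≤ β)
    (hgrowth : ∀ ξ, M < ‖ξ‖ → ‖ξ‖ ^ β ≤ (Ψ ξ).re) (ξ : E) :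
    ‖ξ‖ ^ β ≤ (Ψ ξ).re + M ^ β := by
  rcases le_or_gt ‖ξ‖ M with hle | hlt
  · linarith [hΨre ξ, Real.rpow_le_rpow (norm_nonneg ξ) hle hβ]
  · linarith [hgrowth ξ hlt, Real.rpow_nonneg hM β]

lemma norm_cexp_neg_mul_le (hΨre : ∀ ξ, 0 ≤ (Ψ ξ).re) (hM : 0 ≤ M) (hβ : 0 ≤ β)
    (hgrowth : ∀ ξ, M < ‖ξ‖ → ‖ξ‖ ^ β ≤ (Ψ ξ).re) {t : ℝ} (ht : 0 ≤ t) (ξ : E) :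
    ‖cexp (-(t : ℂ) * Ψ ξ)‖ ≤ Real.exp (t * M ^ β) * Real.exp (-t * ‖ξ‖ ^ β) := by
  rw [Complex.norm_exp, ← Real.exp_add, Real.exp_le_exp]
  have := mul_le_mul_of_nonneg_left (norm_rpow_le_re_add_rpow hΨre hM hβ hgrowth ξ) ht
  simp only [neg_mul, neg_re, re_ofReal_mul]
  linarith

end Symbol

lemma norm_transDensity_add_sub_le {n : ℕ} {Ψ : EuclideanSpace ℝ (Fin n) → ℂ}
    (hΨcont : Continuous Ψ) (hΨre : ∀ ξ, 0 ≤ (Ψ ξ).re) {M β : ℝ} (hM : 0 ≤ M) (hβ : 0 < β)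
    (hgrowth : ∀ ξ : EuclideanSpace ℝ (Fin n), M < ‖ξ‖ → ‖ξ‖ ^ β ≤ (Ψ ξ).re)
    {θ : ℝ} (hθ0 : 0 ≤ θ) (hθ1 : θ ≤ 1) {t : ℝ} (ht : 0 < t) (x h : EuclideanSpace ℝ (Fin n)) :
    ‖transDensity n Ψ t (x + h) - transDensity n Ψ t x‖ ≤
      ((2 * Real.pi) ^ n)⁻¹ * Real.exp (t * M ^ β) * 2 ^ (1 - θ) *
        (∫ ξ : EuclideanSpace ℝ (Fin n), ‖ξ‖ ^ θ * Real.exp (-‖ξ‖ ^ β)) *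
          ‖h‖ ^ θ * t ^ (-((θ + n) / β)) := by
  set F : EuclideanSpace ℝ (Fin n) → EuclideanSpace ℝ (Fin n) → ℂ := fun y ξ =>
    cexp (-(t : ℂ) * Ψ ξ) * cexp (-(I * ((inner ℝ y ξ : ℝ) : ℂ)))
  have hΨexp := norm_cexp_neg_mul_le hΨre hM hβ.le hgrowth ht.le
  have hF : ∀ y, Integrable (F y) := fun y => by
    refine ((integrable_norm_rpow_mul_exp_neg_mul_rpow volume le_rfl hβ ht).const_mul
      (Real.exp (t * M ^ β))).mono' (by fun_prop : Continuous (F y)).aestronglyMeasurable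
      (ae_of_all _ fun ξ => ?_)
    have hunit : ‖cexp (-(I * ((inner ℝ y ξ : ℝ) : ℂ)))‖ = 1 := by simp [Complex.norm_exp]
    simpa [F, hunit] using hΨexp ξ
  have hpt : ∀ ξ, ‖F (x + h) ξ - F x ξ‖ ≤
      Real.exp (t * M ^ β) * 2 ^ (1 - θ) * ‖h‖ ^ θ * (‖ξ‖ ^ θ * Real.exp (-t * ‖ξ‖ ^ β)) := by
    intro ξ
    have hshift : F (x + h) ξ - F x ξ = F x ξ * (cexp (-(I * ((inner ℝ h ξ : ℝ) : ℂ))) - 1) := by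
      simp only [F, inner_add_left, ofReal_add, mul_add, neg_add, Complex.exp_add]
      ring
    have hunit : ‖cexp (-(I * ((inner ℝ x ξ : ℝ) : ℂ)))‖ = 1 := by simp [Complex.norm_exp]
    rw [hshift, norm_mul, norm_mul, hunit, mul_one]
    calc _ ≤ (Real.exp (t * M ^ β) * Real.exp (-t * ‖ξ‖ ^ β)) *
          (2 ^ (1 - θ) * |inner ℝ h ξ| ^ θ) :=
          mul_le_mul (hΨexp ξ) (norm_cexp_neg_I_mul_sub_one_le _ hθ0 hθ1) (norm_nonneg _)
            (by positivity)
      _ ≤ (Real.exp (t * M ^ β) * Real.exp (-t * ‖ξ‖ ^ β)) * (2 ^ (1 - θ) * (‖h‖ * ‖ξ‖) ^ θ) := by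
          gcongr
          exact abs_real_inner_le_norm h ξ
      _ = _ := by
          rw [Real.mul_rpow (norm_nonneg h) (norm_nonneg ξ)]
          ring
  calc ‖transDensity n Ψ t (x + h) - transDensity n Ψ t x‖
      = ((2 * Real.pi) ^ n)⁻¹ * ‖∫ ξ, (F (x + h) ξ - F x ξ)‖ := by
        rw [transDensity, transDensity, ← mul_sub, ← integral_sub (hF _) (hF _), norm_mul,
          norm_real, Real.norm_of_nonneg (by positivity)]
    _ ≤ ((2 * Real.pi) ^ n)⁻¹ * ∫ ξ, Real.exp (t * M ^ β) * 2 ^ (1 - θ) * ‖h‖ ^ θ *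
          (‖ξ‖ ^ θ * Real.exp (-t * ‖ξ‖ ^ β)) := by
        gcongr
        exact norm_integral_le_of_norm_le
          ((integrable_norm_rpow_mul_exp_neg_mul_rpow volume hθ0 hβ ht).const_mul _)
          (ae_of_all _ hpt)
    _ = _ := by
        rw [integral_const_mul, integral_norm_rpow_mul_exp_neg_mul_rpow volume hβ ht,
          finrank_euclideanSpace_fin]
        ring

theorem stmt3_general (n : ℕ) (Ψ : EuclideanSpace ℝ (Fin n) → ℂ) (hΨcont : Continuous Ψ)
    (hΨre : ∀ ξ, 0 ≤ (Ψ ξ).re) (M β : ℝ) (hM : 0 < M) (hβ : β ∈ Set.Ioc (0 : ℝ) 2)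
    (hgrowth : ∀ ξ : EuclideanSpace ℝ (Fin n), M < ‖ξ‖ → ‖ξ‖ ^ β ≤ (Ψ ξ).re)
    (θ : ℝ) (hθ : θ ∈ Set.Ioc (0 : ℝ) 1) (T : ℝ) :
    ∃ C : ℝ, 0 < C ∧ ∀ t ∈ Set.Ioc (0 : ℝ) T, ∀ x h : EuclideanSpace ℝ (Fin n),
      ‖transDensity n Ψ t (x + h) - transDensity n Ψ t x‖ ≤
        C * ‖h‖ ^ θ * t ^ (-((θ + n) / β)) := by
  obtain ⟨hβ0, -⟩ := hβ
  obtain ⟨hθ0, hθ1⟩ := hθ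
  set K := ∫ ξ : EuclideanSpace ℝ (Fin n), ‖ξ‖ ^ θ * Real.exp (-‖ξ‖ ^ β)
  refine ⟨((2 * Real.pi) ^ n)⁻¹ * Real.exp (T * M ^ β) * 2 ^ (1 - θ) * K + 1, by positivity,
    fun t ⟨ht0, htT⟩ x h => ?_⟩
  refine (norm_transDensity_add_sub_le hΨcont hΨre hM.le hβ0 hgrowth hθ0.le hθ1 ht0 x h).trans ?_
  gcongr
  exact le_add_of_le_of_nonneg (by gcongr) zero_le_one

theorem stmt3 (n : ℕ) (Ψ : EuclideanSpace ℝ (Fin n) → ℂ) (hΨcont : Continuous Ψ)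
    (hΨre : ∀ ξ, 0 ≤ (Ψ ξ).re) (M β : ℝ) (hM : 0 < M) (hβ : β ∈ Set.Ioc (0 : ℝ) 2)
    (hgrowth : ∀ ξ : EuclideanSpace ℝ (Fin n), M < ‖ξ‖ → ‖ξ‖ ^ β ≤ (Ψ ξ).re)
    (θ : ℝ) (hθ : θ ∈ Set.Ioc (0 : ℝ) 1) (T : ℝ) (hT : 0 < T) :
    ∃ C : ℝ, 0 < C ∧ ∀ t ∈ Set.Ioc (0 : ℝ) T, ∀ x h : EuclideanSpace ℝ (Fin n),
      ‖transDensity n Ψ t (x + h) - transDensity n Ψ t x‖ ≤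
        C * ‖h‖ ^ θ * t ^ (-((θ + n) / β)) :=
  stmt3_general n Ψ hΨcont hΨre M β hM hβ hgrowth θ hθ T
end
end

section
/- Let Ψ: ℝⁿ → ℂ be measurable with Re Ψ ≥ 0 and such that the set {ξ ∈ ℝⁿ : |Ψ(ξ)| ≤ 1} is bounded. Let μ be a nonnegative Borel measure on ℝⁿ that is finite on bounded sets. If ∫_{ℝⁿ} |Ψ(ξ)|^γ μ(dξ) / (1 + Re Ψ(ξ)) < ∞ for some γ ∈ (0,1), then for every η ∈ (0,γ), ∫_{ℝⁿ} μ(dξ) / (1 + Re Ψ(ξ))^{1−η} < ∞. -/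
open MeasureTheory Complex Set

noncomputable section

/-! Where `‖Ψ‖ ≤ 1` the integrand is at most `1` and `μ` is finite, since that set is bounded.
Elsewhere `1 + Re Ψ ≤ 2 ‖Ψ‖`, so `(1 + Re Ψ)^(η - 1) = (1 + Re Ψ)^η / (1 + Re Ψ)` is at most
`2^η ‖Ψ‖^η / (1 + Re Ψ) ≤ 2^η ‖Ψ‖^γ / (1 + Re Ψ)`, which is integrable by assumption. -/

theorem integrable_of_norm_le_on_of_norm_le_off {α E : Type*} [MeasurableSpace α]
    [NormedAddCommGroup E] {μ : Measure α} {f : α → E} {g : α → ℝ} {s : Set α} {C : ℝ}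
    (hs : MeasurableSet s) (hμs : μ s < ⊤) (hf : AEStronglyMeasurable f μ) (hg : Integrable g μ)
    (hf_on : ∀ x ∈ s, ‖f x‖ ≤ C) (hf_off : ∀ x ∉ s, ‖f x‖ ≤ g x) : Integrable f μ := by
  rw [← integrableOn_univ, ← union_compl_self s, integrableOn_union]
  exact ⟨.of_bound hμs hf.restrict C (ae_restrict_of_forall_mem hs hf_on),
    hg.integrableOn.mono' hf.restrict (ae_restrict_of_forall_mem hs.compl hf_off)⟩

theorem inv_one_add_rpow_one_sub_le_one {r η : ℝ} (hr : 0 ≤ r) (hη : η ≤ 1) :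
    ((1 + r) ^ (1 - η))⁻¹ ≤ 1 :=
  inv_le_one_of_one_le₀ (Real.one_le_rpow (by linarith) (by linarith))

theorem inv_one_add_rpow_one_sub_le {r a η γ : ℝ} (hr : 0 ≤ r) (hra : r ≤ a) (ha : 1 ≤ a)
    (hη : 0 ≤ η) (hηγ : η ≤ γ) :
    ((1 + r) ^ (1 - η))⁻¹ ≤ 2 ^ η * (a ^ γ / (1 + r)) := by
  have hr₁ : 0 < 1 + r := by linarith
  have hpow : (1 + r) ^ η ≤ 2 ^ η * a ^ γ :=
    calc (1 + r) ^ η ≤ (2 * a) ^ η := Real.rpow_le_rpow hr₁.le (by linarith) hη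
      _ = 2 ^ η * a ^ η := Real.mul_rpow zero_le_two (by linarith)
      _ ≤ 2 ^ η * a ^ γ := by gcongr
  rw [Real.rpow_sub hr₁, Real.rpow_one, inv_div, ← mul_div_assoc]
  gcongr

theorem stmt15 (n : ℕ) (Ψ : EuclideanSpace ℝ (Fin n) → ℂ) (hΨmeas : Measurable Ψ)
    (hΨre : ∀ ξ, 0 ≤ (Ψ ξ).re)
    (hbdd : Bornology.IsBounded {ξ : EuclideanSpace ℝ (Fin n) | ‖Ψ ξ‖ ≤ 1})
    (μ : Measure (EuclideanSpace ℝ (Fin n))) (hμ : ∀ s : Set (EuclideanSpace ℝ (Fin n)), Bornology.IsBounded s → μ s < ⊤)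
    (γ : ℝ) (hγ : γ ∈ Set.Ioo (0 : ℝ) 1)
    (hint : Integrable (fun ξ => ‖Ψ ξ‖ ^ γ / (1 + (Ψ ξ).re)) μ) :
    ∀ η : ℝ, η ∈ Set.Ioo (0 : ℝ) γ →
      Integrable (fun ξ => ((1 + (Ψ ξ).re) ^ (1 - η))⁻¹) μ := by
  rintro η ⟨hη₀, hηγ⟩
  have hnorm (ξ) : ‖((1 + (Ψ ξ).re) ^ (1 - η))⁻¹‖ = ((1 + (Ψ ξ).re) ^ (1 - η))⁻¹ :=
    Real.norm_of_nonneg (inv_nonneg.2 (Real.rpow_nonneg (by linarith [hΨre ξ]) _))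
  have hre : Measurable fun ξ => (Ψ ξ).re := measurable_re.comp hΨmeas
  refine integrable_of_norm_le_on_of_norm_le_off (C := 1)
    (measurableSet_le hΨmeas.norm measurable_const) (hμ _ hbdd)
    ((hre.const_add 1).pow_const _).inv.aestronglyMeasurable (hint.const_mul (2 ^ η))
    (fun ξ _ => ?_) (fun ξ hξ => ?_)
  · rw [hnorm]
    exact inv_one_add_rpow_one_sub_le_one (hΨre ξ) (by linarith [hγ.2])
  · rw [hnorm]
    exact inv_one_add_rpow_one_sub_le (hΨre ξ) (re_le_norm _) (not_le.1 hξ).le hη₀.le hηγ.le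
end
end
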